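/- For integers p, u ≥ 2 and real s₁, s₂ > 1, ζ(p)·ζ(u, s₂, s₁) = ∑_{i=0}^{u-1} C(p-1+i, i) ζ(p+i, u-i, s₂, s₁) + ∑_{i=0}^{p-1} C(u-1+i, i) ∑_{l,m,n,h≥1} (l+m+n+h)^{-(u+i)} l^{-(p-i)} (m+n)^{-s₂} m^{-s₁}. -/

import Mathlib

/-- The Riemann zeta value `ζ(p) = ∑_{n ≥ 1} n^{-p}`. -/
noncomputable def zeta1 (p : ℕ) : ℝ := ∑' n : ℕ, 1 / ((n : ℝ) + 1) ^ p

/-- The triple zeta function `ζ(s₁, s₂, s₃) = ∑_{m₁ > m₂ > m₃ > 0} ∏ m_j^{-s_j}`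
with real arguments. -/
noncomputable def zr3 (s₁ s₂ s₃ : ℝ) : ℝ :=
  ∑' (a : ℕ) (b : ℕ) (c : ℕ),
    ((a : ℝ) + (b : ℝ) + (c : ℝ) + 3) ^ (-s₁) *
      ((b : ℝ) + (c : ℝ) + 2) ^ (-s₂) * ((c : ℝ) + 1) ^ (-s₃)

/-- The quadruple zeta function `ζ(s₁, s₂, s₃, s₄) = ∑_{m₁ > m₂ > m₃ > m₄ > 0} ∏ m_j^{-s_j}`
with real arguments. -/
noncomputable def zr4 (s₁ s₂ s₃ s₄ : ℝ) : ℝ :=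
  ∑' (a : ℕ) (b : ℕ) (c : ℕ) (d : ℕ),
    ((a : ℝ) + (b : ℝ) + (c : ℝ) + (d : ℝ) + 4) ^ (-s₁) *
      ((b : ℝ) + (c : ℝ) + (d : ℝ) + 3) ^ (-s₂) *
      ((c : ℝ) + (d : ℝ) + 2) ^ (-s₃) * ((d : ℝ) + 1) ^ (-s₄)

/-!
With `x = l + 1` and `y = a + b + c + 3`, each term of `ζ(p) ζ(u, s₂, s₁)` contains
`x^{-p} y^{-u}`, and the partial-fraction expansion
  `x^{-p} y^{-u} = ∑_{i<u} C(p-1+i, i) (x+y)^{-(p+i)} y^{-(u-i)}`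
  `            + ∑_{i<p} C(u-1+i, i) (x+y)^{-(u+i)} x^{-(p-i)}`
splits it into terms of the two sums on the right, since `x + y = l + a + b + c + 4`.
Multiplied by `x^p y^u`, the expansion reads
`t^p ∑_{i<u} C(p-1+i, i) s^i + s^u ∑_{i<p} C(u-1+i, i) t^i = 1` with `t = x/(x+y)`,
`s = y/(x+y)`: in the problem of points, one of the two players wins.
All series have nonnegative terms, so they are rearranged in `ℝ≥0∞` and brought back to `ℝ`
once the left-hand side is known to be finite.
-/

open Finset
open scoped ENNReal NNReal

section ProblemOfPoints

variable {R : Type*}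

/-- The probability that a player who wins each round with probability `t` (and loses it with
probability `s`) scores `p + 1` points before the opponent scores `u + 1`. -/
def pointsProb [CommSemiring R] (t s : R) (p u : ℕ) : R :=
  t ^ (p + 1) * ∑ i ∈ range (u + 1), ((p + i).choose i : R) * s ^ i

theorem pointsProb_succ_succ [CommSemiring R] (t s : R) (p u : ℕ) :
    pointsProb t s (p + 1) (u + 1) =
      t * pointsProb t s p (u + 1) + s * pointsProb t s (p + 1) u := by
  have pascal : ∑ i ∈ range (u + 2), ((p + 1 + i).choose i : R) * s ^ i =
      s * ∑ i ∈ range (u + 1), ((p + 1 + i).choose i : R) * s ^ i +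
        ∑ i ∈ range (u + 2), ((p + i).choose i : R) * s ^ i := by
    rw [sum_range_succ' _ (u + 1), sum_range_succ' (fun i => ((p + i).choose i : R) * s ^ i),
      mul_sum, ← add_assoc, ← sum_add_distrib]
    refine congrArg₂ _ (sum_congr rfl fun i _ => ?_) (by simp)
    rw [show p + 1 + (i + 1) = p + 1 + i + 1 by omega, Nat.choose_succ_succ',
      show p + (i + 1) = p + 1 + i by omega]
    push_cast
    ring
  simp only [pointsProb, pascal]
  ring

theorem pointsProb_zero_add_pointsProb [CommRing R] {t s : R} (h : t + s = 1) (u : ℕ) :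
    pointsProb t s 0 u + pointsProb s t u 0 = 1 := by
  simp only [pointsProb, zero_add, Nat.choose_self, Nat.cast_one, one_mul, sum_range_one,
    Nat.choose_zero_right, add_zero, pow_zero, mul_one, pow_one]
  rw [eq_sub_of_add_eq h, mul_neg_geom_sum]
  ring

theorem pointsProb_add_pointsProb [CommRing R] {t s : R} (h : t + s = 1) (p u : ℕ) :
    pointsProb t s p u + pointsProb s t u p = 1 := by
  induction p generalizing u with
  | zero => exact pointsProb_zero_add_pointsProb h u
  | succ p ihp =>
    induction u with
    | zero => rw [add_comm]; exact pointsProb_zero_add_pointsProb (by rwa [add_comm]) (p + 1)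
    | succ u ihu =>
      rw [pointsProb_succ_succ, pointsProb_succ_succ]
      linear_combination t * ihp (u + 1) + s * ihu + h

end ProblemOfPoints

section PartialFractions

variable {K : Type*} [Field K]

theorem inv_pow_mul_pow_mul_div_pow_mul_div_pow {x y z : K} (hx : x ≠ 0) (hy : y ≠ 0)
    (hz : z ≠ 0) (c : K) {m n i : ℕ} (hi : i ≤ n) :
    (x ^ m * y ^ n)⁻¹ * ((x / z) ^ m * (c * (y / z) ^ i)) =
      c * (z ^ (m + i) * y ^ (n - i))⁻¹ := by
  obtain ⟨k, rfl⟩ := Nat.exists_eq_add_of_le hi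
  rw [Nat.add_sub_cancel_left, div_pow, div_pow, pow_add, pow_add]
  field_simp

theorem inv_pow_mul_pow_eq_sum_choose {x y : K} (hx : x ≠ 0) (hy : y ≠ 0) (hxy : x + y ≠ 0)
    {p u : ℕ} (hp : 0 < p) (hu : 0 < u) :
    (x ^ p * y ^ u)⁻¹ =
      ∑ i ∈ range u, ((p - 1 + i).choose i : K) * ((x + y) ^ (p + i) * y ^ (u - i))⁻¹ +
        ∑ i ∈ range p, ((u - 1 + i).choose i : K) * ((x + y) ^ (u + i) * x ^ (p - i))⁻¹ := by
  obtain ⟨p, rfl⟩ := Nat.exists_eq_add_of_lt hp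
  obtain ⟨u, rfl⟩ := Nat.exists_eq_add_of_lt hu
  have h := pointsProb_add_pointsProb (t := x / (x + y)) (s := y / (x + y)) (by field_simp) p u
  rw [← mul_one (_ ⁻¹), ← h, mul_add]
  simp only [pointsProb, mul_sum, zero_add, Nat.add_sub_cancel]
  congr 1
  · refine sum_congr rfl fun i hi => ?_
    exact inv_pow_mul_pow_mul_div_pow_mul_div_pow hx hy hxy _ (by simp at hi; omega)
  · refine sum_congr rfl fun i hi => ?_
    rw [mul_comm (x ^ _)]
    exact inv_pow_mul_pow_mul_div_pow_mul_div_pow hy hx hxy _ (by simp at hi; omega)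

end PartialFractions

section Series

variable {α β γ δ : Type*}

theorem tsum_eq_toReal_tsum_ofReal {f : α → ℝ} (hf : ∀ a, 0 ≤ f a) :
    ∑' a, f a = (∑' a, ENNReal.ofReal (f a)).toReal := by
  lift f to α → ℝ≥0 using hf
  simp only [ENNReal.ofReal_coe_nnreal, ← NNReal.coe_tsum, NNReal.tsum_eq_toNNReal_tsum]
  rfl

theorem tsum_eq_toReal_tsum_of_eq_toReal {f : α → ℝ} {g : α → ℝ≥0∞}
    (hg : ∑' a, g a ≠ ∞) (hfg : ∀ a, f a = (g a).toReal) :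
    ∑' a, f a = (∑' a, g a).toReal := by
  rw [ENNReal.tsum_toReal_eq (ENNReal.ne_top_of_tsum_ne_top hg)]
  exact tsum_congr hfg

theorem tsum_tsum_tsum_eq_toReal {f : α → β → γ → ℝ} (hf : ∀ a b c, 0 ≤ f a b c)
    (h : ∑' a, ∑' b, ∑' c, ENNReal.ofReal (f a b c) ≠ ∞) :
    ∑' a, ∑' b, ∑' c, f a b c = (∑' a, ∑' b, ∑' c, ENNReal.ofReal (f a b c)).toReal :=
  tsum_eq_toReal_tsum_of_eq_toReal h fun a =>
    tsum_eq_toReal_tsum_of_eq_toReal (ENNReal.ne_top_of_tsum_ne_top h a) fun b =>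
      tsum_eq_toReal_tsum_ofReal (hf a b)

theorem tsum_tsum_tsum_tsum_eq_toReal {f : α → β → γ → δ → ℝ}
    (hf : ∀ a b c d, 0 ≤ f a b c d)
    (h : ∑' a, ∑' b, ∑' c, ∑' d, ENNReal.ofReal (f a b c d) ≠ ∞) :
    ∑' a, ∑' b, ∑' c, ∑' d, f a b c d =
      (∑' a, ∑' b, ∑' c, ∑' d, ENNReal.ofReal (f a b c d)).toReal :=
  tsum_eq_toReal_tsum_of_eq_toReal h fun a =>
    tsum_tsum_tsum_eq_toReal (hf a) (ENNReal.ne_top_of_tsum_ne_top h a)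

theorem ENNReal.tsum_tsum_tsum_comm {f : α → β → γ → ℝ≥0∞} :
    ∑' a, ∑' b, ∑' c, f a b c = ∑' c, ∑' b, ∑' a, f a b c := by
  rw [ENNReal.tsum_comm]
  simp_rw [ENNReal.tsum_comm (α := α)]
  rw [ENNReal.tsum_comm]

theorem ENNReal.ofReal_sum_natCast_mul {ι : Type*} (s : Finset ι) (c : ι → ℕ)
    {f : ι → ℝ} (hf : ∀ i, 0 ≤ f i) :
    ENNReal.ofReal (∑ i ∈ s, (c i : ℝ) * f i) =
      ∑ i ∈ s, (c i : ℝ≥0∞) * ENNReal.ofReal (f i) := by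
  rw [ENNReal.ofReal_sum_of_nonneg fun i _ => mul_nonneg (Nat.cast_nonneg _) (hf i)]
  simp only [ENNReal.ofReal_mul (Nat.cast_nonneg _), ENNReal.ofReal_natCast]

theorem ENNReal.toReal_sum_natCast_mul {ι : Type*} {s : Finset ι} {c : ι → ℕ}
    {X : ι → ℝ≥0∞} {x : ι → ℝ} (hc : ∀ i ∈ s, c i ≠ 0)
    (hX : ∀ i ∈ s, X i ≠ ∞ → x i = (X i).toReal)
    (h : ∑ i ∈ s, (c i : ℝ≥0∞) * X i ≠ ∞) :
    (∑ i ∈ s, (c i : ℝ≥0∞) * X i).toReal = ∑ i ∈ s, (c i : ℝ) * x i := by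
  rw [ENNReal.toReal_sum fun i hi => ENNReal.sum_ne_top.1 h i hi]
  refine sum_congr rfl fun i hi => ?_
  have hXi : X i ≠ ∞ :=
    (ENNReal.lt_top_of_mul_ne_top_right (ENNReal.sum_ne_top.1 h i hi) (mod_cast hc i hi)).ne
  rw [ENNReal.toReal_mul, ENNReal.toReal_natCast, hX i hi hXi]

theorem tsum_ofReal_rpow_ne_top {s : ℝ} (hs : 1 < s) :
    ∑' n : ℕ, ENNReal.ofReal (((n : ℝ) + 1) ^ (-s)) ≠ ∞ := by
  refine Summable.tsum_ofReal_ne_top ?_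
  have := (Real.summable_one_div_nat_add_rpow 1 s).2 hs
  refine this.congr fun n => ?_
  rw [abs_of_pos (by positivity), one_div, Real.rpow_neg (by positivity)]

end Series

noncomputable def zr3Term (t₁ t₂ t₃ : ℝ) (a b c : ℕ) : ℝ :=
  ((a : ℝ) + b + c + 3) ^ (-t₁) * ((b : ℝ) + c + 2) ^ (-t₂) * ((c : ℝ) + 1) ^ (-t₃)

noncomputable def zr4Term (t₁ t₂ t₃ t₄ : ℝ) (a b c d : ℕ) : ℝ :=
  ((a : ℝ) + b + c + d + 4) ^ (-t₁) * ((b : ℝ) + c + d + 3) ^ (-t₂) *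
    ((c : ℝ) + d + 2) ^ (-t₃) * ((d : ℝ) + 1) ^ (-t₄)

noncomputable def zetaA4Term (t₁ t₂ t₃ t₄ : ℝ) (l m n h : ℕ) : ℝ :=
  ((l : ℝ) + m + n + h + 4) ^ (-t₁) * ((l : ℝ) + 1) ^ (-t₂) *
    ((m : ℝ) + n + 2) ^ (-t₃) * ((m : ℝ) + 1) ^ (-t₄)

theorem zr3Term_nonneg (t₁ t₂ t₃ : ℝ) (a b c : ℕ) :
    0 ≤ zr3Term t₁ t₂ t₃ a b c := by
  unfold zr3Term; positivity

theorem zr4Term_nonneg (t₁ t₂ t₃ t₄ : ℝ) (a b c d : ℕ) :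
    0 ≤ zr4Term t₁ t₂ t₃ t₄ a b c d := by
  unfold zr4Term; positivity

theorem zetaA4Term_nonneg (t₁ t₂ t₃ t₄ : ℝ) (l m n h : ℕ) :
    0 ≤ zetaA4Term t₁ t₂ t₃ t₄ l m n h := by
  unfold zetaA4Term; positivity

theorem one_div_pow_mul_zr3Term {p u : ℕ} (hp : 0 < p) (hu : 0 < u) (s₁ s₂ : ℝ)
    (l a b c : ℕ) :
    1 / ((l : ℝ) + 1) ^ p * zr3Term u s₂ s₁ a b c =
      ∑ i ∈ range u, ((p - 1 + i).choose i : ℝ) *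
          zr4Term (p + i : ℕ) (u - i : ℕ) s₂ s₁ l a b c +
        ∑ i ∈ range p, ((u - 1 + i).choose i : ℝ) *
          zetaA4Term (u + i : ℕ) (p - i : ℕ) s₂ s₁ l c b a := by
  have hx : (0 : ℝ) < l + 1 := by positivity
  have hy : (0 : ℝ) < a + b + c + 3 := by positivity
  have key := inv_pow_mul_pow_eq_sum_choose hx.ne' hy.ne' (by positivity) hp hu
  simp only [zr3Term, zr4Term, zetaA4Term, Real.rpow_neg_natCast, zpow_neg, zpow_natCast,
    one_div]
  rw [show (l : ℝ) + a + b + c + 4 = l + 1 + (a + b + c + 3) by ring,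
    show (l : ℝ) + c + b + a + 4 = l + 1 + (a + b + c + 3) by ring,
    show (c : ℝ) + b + 2 = b + c + 2 by ring]
  calc _ = ((l + 1 : ℝ) ^ p * (a + b + c + 3 : ℝ) ^ u)⁻¹ *
        (((b : ℝ) + c + 2) ^ (-s₂) * ((c : ℝ) + 1) ^ (-s₁)) := by ring
    _ = _ := by
      rw [key, add_mul, sum_mul, sum_mul]
      congr 1 <;> exact sum_congr rfl fun i _ => by ring

theorem tsum_ofReal_mul_tsum_ofReal_zr3Term {p u : ℕ} (hp : 0 < p) (hu : 0 < u)
    (s₁ s₂ : ℝ) :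
    (∑' l : ℕ, ENNReal.ofReal (1 / ((l : ℝ) + 1) ^ p)) *
        ∑' (a : ℕ) (b : ℕ) (c : ℕ), ENNReal.ofReal (zr3Term u s₂ s₁ a b c) =
      ∑ i ∈ range u, ((p - 1 + i).choose i : ℝ≥0∞) *
          ∑' (l : ℕ) (a : ℕ) (b : ℕ) (c : ℕ),
            ENNReal.ofReal (zr4Term (p + i : ℕ) (u - i : ℕ) s₂ s₁ l a b c) +
        ∑ i ∈ range p, ((u - 1 + i).choose i : ℝ≥0∞) *
          ∑' (l : ℕ) (m : ℕ) (n : ℕ) (h : ℕ),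
            ENNReal.ofReal (zetaA4Term (u + i : ℕ) (p - i : ℕ) s₂ s₁ l m n h) := by
  have hpt (l a b c : ℕ) :
      ENNReal.ofReal (1 / ((l : ℝ) + 1) ^ p) * ENNReal.ofReal (zr3Term u s₂ s₁ a b c) =
        ∑ i ∈ range u, ((p - 1 + i).choose i : ℝ≥0∞) *
            ENNReal.ofReal (zr4Term (p + i : ℕ) (u - i : ℕ) s₂ s₁ l a b c) +
          ∑ i ∈ range p, ((u - 1 + i).choose i : ℝ≥0∞) *
            ENNReal.ofReal (zetaA4Term (u + i : ℕ) (p - i : ℕ) s₂ s₁ l c b a) := by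
    rw [← ENNReal.ofReal_mul (by positivity), one_div_pow_mul_zr3Term hp hu,
      ENNReal.ofReal_add
        (sum_nonneg fun i _ => mul_nonneg (Nat.cast_nonneg _) (zr4Term_nonneg ..))
        (sum_nonneg fun i _ => mul_nonneg (Nat.cast_nonneg _) (zetaA4Term_nonneg ..)),
      ENNReal.ofReal_sum_natCast_mul _ (fun i => (p - 1 + i).choose i)
        fun i => zr4Term_nonneg ..,
      ENNReal.ofReal_sum_natCast_mul _ (fun i => (u - 1 + i).choose i)
        fun i => zetaA4Term_nonneg ..]
  rw [← ENNReal.tsum_mul_right]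
  simp_rw [← ENNReal.tsum_mul_left, hpt]
  simp only [ENNReal.tsum_add, Summable.tsum_finsetSum fun _ _ => ENNReal.summable,
    ENNReal.tsum_mul_left]
  congr 1
  refine sum_congr rfl fun i _ => congrArg _ (tsum_congr fun l => ?_)
  exact ENNReal.tsum_tsum_tsum_comm

theorem tsum_ofReal_zr3Term_ne_top {t₁ t₂ t₃ : ℝ} (h₁ : 1 < t₁) (h₂ : 1 < t₂)
    (h₃ : 1 < t₃) :
    ∑' (a : ℕ) (b : ℕ) (c : ℕ), ENNReal.ofReal (zr3Term t₁ t₂ t₃ a b c) ≠ ∞ := by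
  let g (t : ℝ) (n : ℕ) : ℝ≥0∞ := ENNReal.ofReal (((n : ℝ) + 1) ^ (-t))
  have hle (a b c : ℕ) :
      ENNReal.ofReal (zr3Term t₁ t₂ t₃ a b c) ≤ g t₁ a * g t₂ b * g t₃ c := by
    simp only [g, zr3Term]
    rw [← ENNReal.ofReal_mul (by positivity), ← ENNReal.ofReal_mul (by positivity)]
    refine ENNReal.ofReal_le_ofReal (mul_le_mul_of_nonneg_right
      (mul_le_mul ?_ ?_ (by positivity) (by positivity)) (by positivity))
    · exact Real.rpow_le_rpow_of_nonpos (by positivity)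
        (by linarith [b.cast_nonneg (α := ℝ), c.cast_nonneg (α := ℝ)]) (by linarith)
    · exact Real.rpow_le_rpow_of_nonpos (by positivity) (by linarith [c.cast_nonneg (α := ℝ)])
        (by linarith)
  refine ne_top_of_le_ne_top ?_ (ENNReal.tsum_le_tsum fun a => ENNReal.tsum_le_tsum fun b =>
    ENNReal.tsum_le_tsum fun c => hle a b c)
  simp only [ENNReal.tsum_mul_left, ENNReal.tsum_mul_right]
  exact ENNReal.mul_ne_top (ENNReal.mul_ne_top (tsum_ofReal_rpow_ne_top h₁)
    (tsum_ofReal_rpow_ne_top h₂)) (tsum_ofReal_rpow_ne_top h₃)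

theorem tsum_ofReal_one_div_pow_ne_top {p : ℕ} (hp : 1 < p) :
    ∑' n : ℕ, ENNReal.ofReal (1 / ((n : ℝ) + 1) ^ p) ≠ ∞ := by
  simpa only [Real.rpow_neg_natCast, zpow_neg, zpow_natCast, one_div] using
    tsum_ofReal_rpow_ne_top (s := p) (by exact_mod_cast hp)

theorem shuffle_A4_lemma (p u : ℕ) (hp : 2 ≤ p) (hu : 2 ≤ u)
    (s₁ s₂ : ℝ) (hs₁ : 1 < s₁) (hs₂ : 1 < s₂) :
    zeta1 p * zr3 (u : ℝ) s₂ s₁ =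
      (∑ i ∈ Finset.range u, (Nat.choose (p - 1 + i) i : ℝ) *
        zr4 ((p + i : ℕ) : ℝ) ((u - i : ℕ) : ℝ) s₂ s₁) +
      (∑ i ∈ Finset.range p, (Nat.choose (u - 1 + i) i : ℝ) *
        ∑' (l : ℕ) (m : ℕ) (n : ℕ) (h : ℕ),
          ((l : ℝ) + (m : ℝ) + (n : ℝ) + (h : ℝ) + 4) ^ (-((u + i : ℕ) : ℝ)) *
            ((l : ℝ) + 1) ^ (-((p - i : ℕ) : ℝ)) *
            ((m : ℝ) + (n : ℝ) + 2) ^ (-s₂) * ((m : ℝ) + 1) ^ (-s₁)) := by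
  have hshuffle := tsum_ofReal_mul_tsum_ofReal_zr3Term (p := p) (u := u) (by omega) (by omega)
    s₁ s₂
  have hζfin := tsum_ofReal_one_div_pow_ne_top hp
  have h3fin := tsum_ofReal_zr3Term_ne_top (by exact_mod_cast hu : (1 : ℝ) < u) hs₂ hs₁
  have hζ : zeta1 p = (∑' n : ℕ, ENNReal.ofReal (1 / ((n : ℝ) + 1) ^ p)).toReal :=
    tsum_eq_toReal_tsum_ofReal fun n => by positivity
  have h3 : zr3 u s₂ s₁ =
      (∑' (a : ℕ) (b : ℕ) (c : ℕ), ENNReal.ofReal (zr3Term u s₂ s₁ a b c)).toReal :=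
    tsum_tsum_tsum_eq_toReal (zr3Term_nonneg _ _ _) h3fin
  have hfin := hshuffle ▸ ENNReal.mul_ne_top hζfin h3fin
  obtain ⟨hA, hB⟩ := ENNReal.add_ne_top.1 hfin
  rw [hζ, h3, ← ENNReal.toReal_mul, hshuffle, ENNReal.toReal_add hA hB]
  congr 1
  · refine ENNReal.toReal_sum_natCast_mul (fun i _ => (Nat.choose_pos le_add_self).ne')
      (fun i _ hX => tsum_tsum_tsum_tsum_eq_toReal (zr4Term_nonneg _ _ _ _) hX) hA
  · refine ENNReal.toReal_sum_natCast_mul (fun i _ => (Nat.choose_pos le_add_self).ne')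
      (fun i _ hX => tsum_tsum_tsum_tsum_eq_toReal (zetaA4Term_nonneg _ _ _ _) hX) hB
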